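/- Let r1, r2, r3 > 0 be real numbers, let k1, k2 ∈ ℝ² be linearly independent vectors, let α1, α2 ∈ ℚ, and set k3 = α1 k1 + α2 k2. Let a ∈ ℝ and ω1, ω2, ω3, ω1', ω2', ω3' ∈ ℝ, and define V1(x) = a + r1 cos(2π k1·x + ω1) + r2 cos(2π k2·x + ω2) + r3 cos(2π k3·x + ω3) and V2(x) = a + r1 cos(2π k1·x + ω1') + r2 cos(2π k2·x + ω2') + r3 cos(2π k3·x + ω3') for x ∈ ℝ². If sup over x ∈ ℝ² of V1(x) equals sup over x ∈ ℝ² of V2(x), then there exists x0 ∈ ℝ² such that either V1(x) = V2(x + x0) for all x ∈ ℝ², or V1(x) = V2(−x + x0) for all x ∈ ℝ². -/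

import Mathlib

/-!
With `θᵢ = 2π kᵢ·x + ωᵢ`, which by linear independence range over all of `ℝ²`, the potential is
`a + r₁ cos θ₁ + r₂ cos θ₂ + r₃ cos (α₁ θ₁ + α₂ θ₂ + χ)` with `χ = ω₃ - α₁ ω₁ - α₂ ω₂`, so its
supremum is `a + S χ`. The function `S` is even and invariant under the lattice
`Γ = 2π (ℤ + α₁ ℤ + α₂ ℤ)`, which is discrete because the `αᵢ` are rational, and `S χ` strictly
decreases as the distance from `χ` to `Γ` grows. Equal suprema therefore force `χ₁ ≡ ±χ₂ mod Γ`,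
and such a congruence is realised by a translation, resp. a point reflection, of the plane.
-/

noncomputable section

open Real

/-- Euclidean dot product of two planar vectors. -/
def dot (u v : ℝ × ℝ) : ℝ := u.1 * v.1 + u.2 * v.2

theorem dot_add_right (u x y : ℝ × ℝ) : dot u (x + y) = dot u x + dot u y := by
  simp only [dot, Prod.fst_add, Prod.snd_add]; ring

theorem dot_neg_right (u x : ℝ × ℝ) : dot u (-x) = -dot u x := by
  simp only [dot, Prod.fst_neg, Prod.snd_neg]; ring

theorem dot_smul_add_smul (c₁ c₂ : ℝ) (u v x : ℝ × ℝ) :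
    dot (c₁ • u + c₂ • v) x = c₁ * dot u x + c₂ * dot v x := by
  simp only [dot, Prod.fst_add, Prod.snd_add, Prod.smul_fst, Prod.smul_snd, smul_eq_mul]; ring

theorem exists_dot_eq_of_linearIndependent {k₁ k₂ : ℝ × ℝ} (hk : LinearIndependent ℝ ![k₁, k₂])
    (t₁ t₂ : ℝ) : ∃ x, dot k₁ x = t₁ ∧ dot k₂ x = t₂ := by
  have hdet : k₁.1 * k₂.2 - k₁.2 * k₂.1 ≠ 0 := by
    intro hd
    rw [LinearIndependent.pair_iff] at hk
    have hcomb : ∀ s t : ℝ, s • k₁ + t • k₂ = (s * k₁.1 + t * k₂.1, s * k₁.2 + t * k₂.2) :=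
      fun _ _ => rfl
    obtain ⟨-, h₂⟩ := hk k₂.2 (-k₁.2) (by
      rw [hcomb, Prod.mk_eq_zero]; exact ⟨by linear_combination hd, by ring⟩)
    obtain ⟨-, h₄⟩ := hk k₂.1 (-k₁.1) (by
      rw [hcomb, Prod.mk_eq_zero]; exact ⟨by ring, by linear_combination -hd⟩)
    have hk₁ : k₁ = 0 := Prod.ext (neg_eq_zero.mp h₄) (neg_eq_zero.mp h₂)
    exact one_ne_zero (hk 1 0 (by simp [hk₁])).1
  refine ⟨((k₂.2 * t₁ - k₁.2 * t₂) / (k₁.1 * k₂.2 - k₁.2 * k₂.1),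
    (k₁.1 * t₂ - k₂.1 * t₁) / (k₁.1 * k₂.2 - k₁.2 * k₂.1)), ?_, ?_⟩ <;>
  · simp only [dot]
    rw [mul_div_assoc', mul_div_assoc', ← add_div, div_eq_iff hdet]
    ring

theorem exists_forall_le_of_periodic {f : ℝ × ℝ → ℝ} (hf : Continuous f) {p : ℝ} (hp : 0 < p)
    (h₁ : ∀ y, Function.Periodic (fun x => f (x, y)) p)
    (h₂ : ∀ x, Function.Periodic (fun y => f (x, y)) p) :
    ∃ s₀, ∀ s, f s ≤ f s₀ := by
  obtain ⟨s₀, -, hs₀⟩ := (isCompact_Icc.prod isCompact_Icc).exists_isMaxOn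
    ⟨((0 : ℝ), (0 : ℝ)), ⟨le_rfl, hp.le⟩, le_rfl, hp.le⟩
    (hf.continuousOn (s := Set.Icc 0 p ×ˢ Set.Icc 0 p))
  refine ⟨s₀, fun s => ?_⟩
  have hmod : ∀ b, toIcoMod hp 0 b = b - toIcoDiv hp 0 b • p := fun b =>
    eq_sub_of_add_eq (toIcoMod_add_toIcoDiv_zsmul hp 0 b)
  have hred : f s = f (toIcoMod hp 0 s.1, toIcoMod hp 0 s.2) := by
    rw [hmod, hmod, (h₂ _).sub_zsmul_eq, (h₁ s.2).sub_zsmul_eq]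
  have hIcc : ∀ b, toIcoMod hp 0 b ∈ Set.Icc 0 p := fun b =>
    Set.Ico_subset_Icc_self (toIcoMod_mem_Ico' hp b)
  rw [hred]
  exact hs₀ ⟨hIcc _, hIcc _⟩

theorem exists_abs_sub_int_mul_two_pi_le_pi (θ : ℝ) : ∃ m : ℤ, |θ - m * (2 * π)| ≤ π := by
  refine ⟨toIcoDiv two_pi_pos (-π) θ, ?_⟩
  rw [← self_sub_toIcoMod_eq_mul, sub_sub_cancel]
  obtain ⟨h₁, h₂⟩ := toIcoMod_mem_Ico two_pi_pos (-π) θ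
  exact abs_le.mpr ⟨h₁, by linarith⟩

theorem exists_cos_eq_and_mul_eq_neg_abs_mul (a u : ℝ) :
    ∃ v, cos v = cos u ∧ a * v = -(|a| * u) := by
  rcases le_or_gt 0 a with ha | ha
  · exact ⟨-u, cos_neg u, by rw [abs_of_nonneg ha]; ring⟩
  · exact ⟨u, rfl, by rw [abs_of_neg ha]; ring⟩

theorem cos_le_cos_mul {t u : ℝ} (ht₀ : 0 ≤ t) (ht₁ : t ≤ 1) (hu₀ : 0 ≤ u) (hu : u ≤ π) :
    cos u ≤ cos (t * u) :=
  cos_le_cos_of_nonneg_of_le_pi (by positivity) hu (mul_le_of_le_one_left hu₀ ht₁)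

theorem cos_lt_cos_mul {t u : ℝ} (ht₀ : 0 ≤ t) (ht₁ : t < 1) (hu₀ : 0 < u) (hu : u ≤ π) :
    cos u < cos (t * u) :=
  cos_lt_cos_of_nonneg_of_le_pi (by positivity) hu (mul_lt_of_lt_one_left hu₀ ht₁)

theorem Rat.exists_common_den (a₁ a₂ : ℚ) :
    ∃ q : ℕ, 0 < q ∧ ∃ n₁ n₂ : ℤ, (a₁ : ℝ) * q = n₁ ∧ (a₂ : ℝ) * q = n₂ := by
  have key : ∀ b c : ℚ, (b : ℝ) * (b.den * c.den : ℕ) = (b.num * c.den : ℤ) := fun b c => by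
    exact_mod_cast (by rw [Nat.cast_mul, ← mul_assoc, Rat.mul_den_eq_num] :
      b * ((b.den * c.den : ℕ) : ℚ) = b.num * c.den)
  exact ⟨a₁.den * a₂.den, Nat.mul_pos a₁.pos a₂.pos, _, _, key a₁ a₂,
    Nat.mul_comm a₁.den a₂.den ▸ key a₂ a₁⟩

section CosSum

variable (r₁ r₂ r₃ a₁ a₂ : ℝ)

def cosSum (ψ : ℝ) (s : ℝ × ℝ) : ℝ :=
  r₁ * cos s.1 + r₂ * cos s.2 + r₃ * cos (a₁ * s.1 + a₂ * s.2 + ψ)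

def cosSumSup (ψ : ℝ) : ℝ := ⨆ s, cosSum r₁ r₂ r₃ a₁ a₂ ψ s

def phaseLattice : AddSubgroup ℝ where
  carrier := {g | ∃ c m₁ m₂ : ℤ, g = 2 * π * (c + a₁ * m₁ + a₂ * m₂)}
  zero_mem' := ⟨0, 0, 0, by simp⟩
  add_mem' := by
    rintro _ _ ⟨c, m₁, m₂, rfl⟩ ⟨c', m₁', m₂', rfl⟩
    exact ⟨c + c', m₁ + m₁', m₂ + m₂', by push_cast; ring⟩
  neg_mem' := by
    rintro _ ⟨c, m₁, m₂, rfl⟩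
    exact ⟨-c, -m₁, -m₂, by push_cast; ring⟩

variable {r₁ r₂ r₃ a₁ a₂}

theorem cosSum_translate (ψ : ℝ) (s : ℝ × ℝ) (c m₁ m₂ : ℤ) :
    cosSum r₁ r₂ r₃ a₁ a₂ ψ (s + (2 * π * m₁, 2 * π * m₂)) =
      cosSum r₁ r₂ r₃ a₁ a₂ (ψ + 2 * π * (c + a₁ * m₁ + a₂ * m₂)) s := by
  simp only [cosSum, Prod.fst_add, Prod.snd_add]
  rw [show s.1 + 2 * π * m₁ = s.1 + m₁ * (2 * π) by ring,
    show s.2 + 2 * π * m₂ = s.2 + m₂ * (2 * π) by ring,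
    show a₁ * (s.1 + m₁ * (2 * π)) + a₂ * (s.2 + m₂ * (2 * π)) + ψ =
      a₁ * s.1 + a₂ * s.2 + (ψ + 2 * π * (c + a₁ * m₁ + a₂ * m₂)) - c * (2 * π) by ring,
    cos_add_int_mul_two_pi, cos_add_int_mul_two_pi, cos_sub_int_mul_two_pi]

theorem cosSum_neg (ψ : ℝ) (s : ℝ × ℝ) :
    cosSum r₁ r₂ r₃ a₁ a₂ (-ψ) (-s) = cosSum r₁ r₂ r₃ a₁ a₂ ψ s := by
  simp only [cosSum, Prod.fst_neg, Prod.snd_neg, cos_neg]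
  rw [show a₁ * -s.1 + a₂ * -s.2 + -ψ = -(a₁ * s.1 + a₂ * s.2 + ψ) by ring, cos_neg]

theorem bddAbove_range_cosSum (ψ : ℝ) : BddAbove (Set.range (cosSum r₁ r₂ r₃ a₁ a₂ ψ)) := by
  have hcos : ∀ r x : ℝ, r * cos x ≤ |r| := fun r x =>
    (le_abs_self _).trans <| by
      rw [abs_mul]; exact mul_le_of_le_one_right (abs_nonneg r) (abs_cos_le_one x)
  refine ⟨|r₁| + |r₂| + |r₃|, ?_⟩
  rintro _ ⟨s, rfl⟩
  exact add_le_add (add_le_add (hcos _ _) (hcos _ _)) (hcos _ _)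

theorem cosSumSup_add_of_mem {ψ g : ℝ} (hg : g ∈ phaseLattice a₁ a₂) :
    cosSumSup r₁ r₂ r₃ a₁ a₂ (ψ + g) = cosSumSup r₁ r₂ r₃ a₁ a₂ ψ := by
  obtain ⟨c, m₁, m₂, rfl⟩ := hg
  simp only [cosSumSup, ← cosSum_translate]
  exact (Equiv.addRight _).surjective.iSup_comp _

theorem cosSumSup_sub_of_mem {ψ g : ℝ} (hg : g ∈ phaseLattice a₁ a₂) :
    cosSumSup r₁ r₂ r₃ a₁ a₂ (ψ - g) = cosSumSup r₁ r₂ r₃ a₁ a₂ ψ := by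
  rw [← cosSumSup_add_of_mem hg, sub_add_cancel]

theorem cosSumSup_neg (ψ : ℝ) : cosSumSup r₁ r₂ r₃ a₁ a₂ (-ψ) = cosSumSup r₁ r₂ r₃ a₁ a₂ ψ := by
  rw [cosSumSup, ← neg_surjective.iSup_comp]
  simp only [cosSum_neg, cosSumSup]

theorem cosSumSup_abs (ψ : ℝ) : cosSumSup r₁ r₂ r₃ a₁ a₂ |ψ| = cosSumSup r₁ r₂ r₃ a₁ a₂ ψ := by
  rcases abs_choice ψ with h | h <;> rw [h]
  exact cosSumSup_neg ψ

theorem exists_cosSum_mul_eq (u₁ u₂ w t : ℝ) :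
    ∃ s, cosSum r₁ r₂ r₃ a₁ a₂ (t * (|a₁| * u₁ + |a₂| * u₂ + w)) s =
      r₁ * cos (t * u₁) + r₂ * cos (t * u₂) + r₃ * cos (t * w) := by
  obtain ⟨v₁, hv₁, ha₁⟩ := exists_cos_eq_and_mul_eq_neg_abs_mul a₁ (t * u₁)
  obtain ⟨v₂, hv₂, ha₂⟩ := exists_cos_eq_and_mul_eq_neg_abs_mul a₂ (t * u₂)
  refine ⟨(v₁, v₂), ?_⟩
  simp only [cosSum, hv₁, hv₂, ha₁, ha₂]
  ring_nf

theorem sum_cos_lt_sum_cos_mul (hr₁ : 0 < r₁) (hr₂ : 0 < r₂) (hr₃ : 0 < r₃) {u₁ u₂ w t : ℝ}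
    (hu₁ : u₁ ∈ Set.Icc 0 π) (hu₂ : u₂ ∈ Set.Icc 0 π) (hw : w ∈ Set.Icc 0 π)
    (hpos : 0 < u₁ ∨ 0 < u₂ ∨ 0 < w) (ht₀ : 0 ≤ t) (ht₁ : t < 1) :
    r₁ * cos u₁ + r₂ * cos u₂ + r₃ * cos w <
      r₁ * cos (t * u₁) + r₂ * cos (t * u₂) + r₃ * cos (t * w) := by
  have d₁ := mul_le_mul_of_nonneg_left (cos_le_cos_mul ht₀ ht₁.le hu₁.1 hu₁.2) hr₁.le
  have d₂ := mul_le_mul_of_nonneg_left (cos_le_cos_mul ht₀ ht₁.le hu₂.1 hu₂.2) hr₂.le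
  have d₃ := mul_le_mul_of_nonneg_left (cos_le_cos_mul ht₀ ht₁.le hw.1 hw.2) hr₃.le
  rcases hpos with h | h | h
  · linarith [mul_lt_mul_of_pos_left (cos_lt_cos_mul ht₀ ht₁ h hu₁.2) hr₁]
  · linarith [mul_lt_mul_of_pos_left (cos_lt_cos_mul ht₀ ht₁ h hu₂.2) hr₂]
  · linarith [mul_lt_mul_of_pos_left (cos_lt_cos_mul ht₀ ht₁ h hw.2) hr₃]

/-- The reduced angles `u₁, u₂, w ∈ [0, π]` of a maximiser for `ψ` satisfy
`|ψ - g| ≤ T := |a₁| u₁ + |a₂| u₂ + w` for some lattice point `g`; shrinking them by the factor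
`|ψ'| / T < 1` gives a point for the phase `|ψ'|` where no cosine is smaller and one is larger. -/
theorem cosSumSup_lt (hr₁ : 0 < r₁) (hr₂ : 0 < r₂) (hr₃ : 0 < r₃) {ψ ψ' : ℝ} {s₀ : ℝ × ℝ}
    (hs₀ : ∀ s, cosSum r₁ r₂ r₃ a₁ a₂ ψ s ≤ cosSum r₁ r₂ r₃ a₁ a₂ ψ s₀)
    (hψ' : ∀ g ∈ phaseLattice a₁ a₂, |ψ'| < |ψ - g|) :
    cosSumSup r₁ r₂ r₃ a₁ a₂ ψ < cosSumSup r₁ r₂ r₃ a₁ a₂ ψ' := by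
  set θ := a₁ * s₀.1 + a₂ * s₀.2 + ψ
  obtain ⟨m₁, hm₁⟩ := exists_abs_sub_int_mul_two_pi_le_pi s₀.1
  obtain ⟨m₂, hm₂⟩ := exists_abs_sub_int_mul_two_pi_le_pi s₀.2
  obtain ⟨m₃, hm₃⟩ := exists_abs_sub_int_mul_two_pi_le_pi θ
  set u₁ := |s₀.1 - m₁ * (2 * π)|
  set u₂ := |s₀.2 - m₂ * (2 * π)|
  set w := |θ - m₃ * (2 * π)|
  set T := |a₁| * u₁ + |a₂| * u₂ + w
  have hval : cosSum r₁ r₂ r₃ a₁ a₂ ψ s₀ = r₁ * cos u₁ + r₂ * cos u₂ + r₃ * cos w := by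
    simp only [u₁, u₂, w, cos_abs, cos_sub_int_mul_two_pi, cosSum, θ]
  have hT : |ψ'| < T := by
    have hg : 2 * π * (m₃ + a₁ * (-m₁ : ℤ) + a₂ * (-m₂ : ℤ)) ∈ phaseLattice a₁ a₂ := ⟨_, _, _, rfl⟩
    refine (hψ' _ hg).trans_le ?_
    calc |ψ - 2 * π * (m₃ + a₁ * (-m₁ : ℤ) + a₂ * (-m₂ : ℤ))|
        = |(θ - m₃ * (2 * π)) - a₁ * (s₀.1 - m₁ * (2 * π)) - a₂ * (s₀.2 - m₂ * (2 * π))| := by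
          simp only [θ]; push_cast; ring_nf
      _ ≤ |θ - m₃ * (2 * π)| + |a₁ * (s₀.1 - m₁ * (2 * π))| + |a₂ * (s₀.2 - m₂ * (2 * π))| :=
          (abs_sub _ _).trans (by gcongr; exact abs_sub _ _)
      _ = T := by rw [abs_mul, abs_mul]; ring
  have hT₀ : 0 < T := (abs_nonneg _).trans_lt hT
  have hpos : 0 < u₁ ∨ 0 < u₂ ∨ 0 < w := by
    by_contra! h
    nlinarith [abs_nonneg a₁, abs_nonneg a₂]
  set t := |ψ'| / T
  have ht : t * T = |ψ'| := div_mul_cancel₀ _ hT₀.ne'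
  obtain ⟨s', hs'⟩ := exists_cosSum_mul_eq (r₁ := r₁) (r₂ := r₂) (r₃ := r₃) u₁ u₂ w t
  rw [ht] at hs'
  calc cosSumSup r₁ r₂ r₃ a₁ a₂ ψ ≤ cosSum r₁ r₂ r₃ a₁ a₂ ψ s₀ := ciSup_le hs₀
    _ < cosSum r₁ r₂ r₃ a₁ a₂ |ψ'| s' := by
      rw [hval, hs']
      exact sum_cos_lt_sum_cos_mul hr₁ hr₂ hr₃ ⟨abs_nonneg _, hm₁⟩ ⟨abs_nonneg _, hm₂⟩
        ⟨abs_nonneg _, hm₃⟩ hpos (by positivity) ((div_lt_one hT₀).mpr hT)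
    _ ≤ cosSumSup r₁ r₂ r₃ a₁ a₂ |ψ'| := le_ciSup (bddAbove_range_cosSum _) s'
    _ = cosSumSup r₁ r₂ r₃ a₁ a₂ ψ' := cosSumSup_abs ψ'

end CosSum

section RationalCoefficients

variable {r₁ r₂ r₃ : ℝ} (a₁ a₂ : ℚ)

theorem exists_forall_cosSum_le (ψ : ℝ) :
    ∃ s₀, ∀ s, cosSum r₁ r₂ r₃ a₁ a₂ ψ s ≤ cosSum r₁ r₂ r₃ a₁ a₂ ψ s₀ := by
  obtain ⟨q, hq, n₁, n₂, h₁, h₂⟩ := Rat.exists_common_den a₁ a₂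
  refine exists_forall_le_of_periodic (by unfold cosSum; fun_prop) (p := 2 * π * q)
    (by positivity) (fun y x => ?_) (fun x y => ?_)
  · have h := cosSum_translate (r₁ := r₁) (r₂ := r₂) (r₃ := r₃) (a₁ := a₁) (a₂ := a₂)
      ψ (x, y) (-n₁) q 0
    rw [show ψ + 2 * π * (((-n₁ : ℤ) : ℝ) + a₁ * ((q : ℤ) : ℝ) + a₂ * ((0 : ℤ) : ℝ)) = ψ by
      push_cast; linear_combination 2 * π * h₁] at h
    simpa using h
  · have h := cosSum_translate (r₁ := r₁) (r₂ := r₂) (r₃ := r₃) (a₁ := a₁) (a₂ := a₂)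
      ψ (x, y) (-n₂) 0 q
    rw [show ψ + 2 * π * (((-n₂ : ℤ) : ℝ) + a₁ * ((0 : ℤ) : ℝ) + a₂ * ((q : ℤ) : ℝ)) = ψ by
      push_cast; linear_combination 2 * π * h₂] at h
    simpa using h

/-- With rational coefficients every lattice point is an integer multiple of `2π / q`. -/
theorem isClosed_phaseLattice : IsClosed (phaseLattice a₁ a₂ : Set ℝ) := by
  obtain ⟨q, hq, n₁, n₂, h₁, h₂⟩ := Rat.exists_common_den a₁ a₂
  have hq' : (0 : ℝ) < q := Nat.cast_pos.mpr hq
  refine Metric.isClosed_of_pairwise_le_dist (ε := 2 * π / q) (by positivity)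
    fun x hx y hy hxy => ?_
  obtain ⟨c, m₁, m₂, hc⟩ := sub_mem hx hy
  obtain ⟨N, hN⟩ : ∃ N : ℤ, x - y = 2 * π / q * N := by
    refine ⟨c * q + n₁ * m₁ + n₂ * m₂, ?_⟩
    rw [hc, div_mul_eq_mul_div, eq_div_iff hq'.ne']
    push_cast
    linear_combination (2 * π * m₁) * h₁ + (2 * π * m₂) * h₂
  have hN₀ : N ≠ 0 := by rintro h; simp [h, sub_eq_zero, hxy] at hN
  rw [Real.dist_eq, hN, abs_mul, abs_of_pos (by positivity : 0 < 2 * π / q)]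
  exact le_mul_of_one_le_right (by positivity) (by exact_mod_cast Int.one_le_abs hN₀)

theorem exists_forall_abs_sub_le (χ : ℝ) :
    ∃ g ∈ phaseLattice a₁ a₂, ∀ g' ∈ phaseLattice a₁ a₂, |χ - g| ≤ |χ - g'| := by
  obtain ⟨g, hg, hdist⟩ := (isClosed_phaseLattice a₁ a₂).exists_infDist_eq_dist ⟨0, zero_mem _⟩ χ
  refine ⟨g, hg, fun g' hg' => ?_⟩
  rw [← Real.dist_eq, ← Real.dist_eq, ← hdist]
  exact Metric.infDist_le_dist_of_mem hg'

theorem abs_sub_le_of_cosSumSup_eq (hr₁ : 0 < r₁) (hr₂ : 0 < r₂) (hr₃ : 0 < r₃)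
    {χ χ' g g' : ℝ} (hg : g ∈ phaseLattice a₁ a₂)
    (hg' : ∀ h ∈ phaseLattice a₁ a₂, |χ' - g'| ≤ |χ' - h|)
    (h : cosSumSup r₁ r₂ r₃ a₁ a₂ χ = cosSumSup r₁ r₂ r₃ a₁ a₂ χ') :
    |χ' - g'| ≤ |χ - g| := by
  by_contra! hlt
  obtain ⟨s₀, hs₀⟩ := exists_forall_cosSum_le (r₁ := r₁) (r₂ := r₂) (r₃ := r₃) a₁ a₂ χ'
  refine (cosSumSup_lt hr₁ hr₂ hr₃ hs₀ (ψ' := |χ - g|) fun h hh => ?_).ne ?_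
  · rw [abs_abs]; exact hlt.trans_le (hg' h hh)
  · rw [cosSumSup_abs, cosSumSup_sub_of_mem hg, h]

theorem sub_mem_or_add_mem_of_cosSumSup_eq (hr₁ : 0 < r₁) (hr₂ : 0 < r₂) (hr₃ : 0 < r₃)
    {χ₁ χ₂ : ℝ} (h : cosSumSup r₁ r₂ r₃ a₁ a₂ χ₁ = cosSumSup r₁ r₂ r₃ a₁ a₂ χ₂) :
    χ₁ - χ₂ ∈ phaseLattice a₁ a₂ ∨ χ₁ + χ₂ ∈ phaseLattice a₁ a₂ := by
  obtain ⟨g₁, hg₁, hmin₁⟩ := exists_forall_abs_sub_le a₁ a₂ χ₁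
  obtain ⟨g₂, hg₂, hmin₂⟩ := exists_forall_abs_sub_le a₁ a₂ χ₂
  have heq : |χ₁ - g₁| = |χ₂ - g₂| := le_antisymm
    (abs_sub_le_of_cosSumSup_eq a₁ a₂ hr₁ hr₂ hr₃ hg₂ hmin₁ h.symm)
    (abs_sub_le_of_cosSumSup_eq a₁ a₂ hr₁ hr₂ hr₃ hg₁ hmin₂ h)
  rcases abs_eq_abs.mp heq with h' | h'
  · left; convert sub_mem hg₁ hg₂ using 1; linarith
  · right; convert add_mem hg₁ hg₂ using 1; linarith

end RationalCoefficients

section PlaneWaves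

variable {r₁ r₂ r₃ a₁ a₂ : ℝ} {k₁ k₂ : ℝ × ℝ}

def phases (k₁ k₂ : ℝ × ℝ) (ω₁ ω₂ : ℝ) (x : ℝ × ℝ) : ℝ × ℝ :=
  (2 * π * dot k₁ x + ω₁, 2 * π * dot k₂ x + ω₂)

theorem phases_add (ω₁ ω₂ : ℝ) (x y : ℝ × ℝ) :
    phases k₁ k₂ ω₁ ω₂ (x + y) = phases k₁ k₂ 0 0 x + phases k₁ k₂ ω₁ ω₂ y := by
  simp only [phases, dot_add_right, Prod.mk_add_mk, add_zero]; ring_nf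

theorem phases_neg (ω₁ ω₂ : ℝ) (x : ℝ × ℝ) :
    phases k₁ k₂ 0 0 (-x) = -phases k₁ k₂ ω₁ ω₂ x + (ω₁, ω₂) := by
  simp only [phases, dot_neg_right, Prod.neg_mk, Prod.mk_add_mk, add_zero]; ring_nf

theorem phases_surjective (hk : LinearIndependent ℝ ![k₁, k₂]) (ω₁ ω₂ : ℝ) :
    Function.Surjective (phases k₁ k₂ ω₁ ω₂) := by
  intro s
  obtain ⟨x, hx₁, hx₂⟩ :=
    exists_dot_eq_of_linearIndependent hk ((s.1 - ω₁) / (2 * π)) ((s.2 - ω₂) / (2 * π))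
  refine ⟨x, Prod.ext ?_ ?_⟩ <;> simp only [phases, hx₁, hx₂] <;> field_simp <;> ring

theorem cosSum_phases (ω₁ ω₂ ω₃ : ℝ) (x : ℝ × ℝ) :
    cosSum r₁ r₂ r₃ a₁ a₂ (ω₃ - a₁ * ω₁ - a₂ * ω₂) (phases k₁ k₂ ω₁ ω₂ x) =
      r₁ * cos (2 * π * dot k₁ x + ω₁) + r₂ * cos (2 * π * dot k₂ x + ω₂) +
        r₃ * cos (2 * π * dot (a₁ • k₁ + a₂ • k₂) x + ω₃) := by
  simp only [cosSum, phases, dot_smul_add_smul]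
  ring_nf

theorem iSup_eq_add_cosSumSup {V : ℝ × ℝ → ℝ} {θ : ℝ × ℝ → ℝ × ℝ} (hθ : Function.Surjective θ)
    {a ψ : ℝ} (hV : ∀ x, V x = a + cosSum r₁ r₂ r₃ a₁ a₂ ψ (θ x)) :
    ⨆ x, V x = a + cosSumSup r₁ r₂ r₃ a₁ a₂ ψ := by
  rw [cosSumSup, ← hθ.iSup_comp (cosSum r₁ r₂ r₃ a₁ a₂ ψ),
    add_ciSup (f := fun x => cosSum r₁ r₂ r₃ a₁ a₂ ψ (θ x))
      ((bddAbove_range_cosSum ψ).mono (Set.range_comp_subset_range θ (cosSum r₁ r₂ r₃ a₁ a₂ ψ)))]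
  exact iSup_congr hV

theorem exists_cosSum_phases_eq_add (hk : LinearIndependent ℝ ![k₁, k₂]) {ψ ψ' : ℝ}
    (ω₁ ω₂ ω₁' ω₂' : ℝ) (h : ψ - ψ' ∈ phaseLattice a₁ a₂) :
    ∃ x₀, ∀ x, cosSum r₁ r₂ r₃ a₁ a₂ ψ (phases k₁ k₂ ω₁ ω₂ x) =
      cosSum r₁ r₂ r₃ a₁ a₂ ψ' (phases k₁ k₂ ω₁' ω₂' (x + x₀)) := by
  obtain ⟨c, m₁, m₂, h⟩ := h
  obtain ⟨x₀, hx₀⟩ :=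
    phases_surjective hk ω₁' ω₂' (ω₁ + 2 * π * m₁, ω₂ + 2 * π * m₂)
  refine ⟨x₀, fun x => ?_⟩
  rw [phases_add, hx₀, show phases k₁ k₂ 0 0 x + (ω₁ + 2 * π * m₁, ω₂ + 2 * π * m₂) =
    phases k₁ k₂ ω₁ ω₂ x + (2 * π * m₁, 2 * π * m₂) by simp only [phases, Prod.mk_add_mk]; ring_nf,
    cosSum_translate _ _ c, ← h, add_sub_cancel]

theorem exists_cosSum_phases_eq_neg_add (hk : LinearIndependent ℝ ![k₁, k₂]) {ψ ψ' : ℝ}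
    (ω₁ ω₂ ω₁' ω₂' : ℝ) (h : ψ + ψ' ∈ phaseLattice a₁ a₂) :
    ∃ x₀, ∀ x, cosSum r₁ r₂ r₃ a₁ a₂ ψ (phases k₁ k₂ ω₁ ω₂ x) =
      cosSum r₁ r₂ r₃ a₁ a₂ ψ' (phases k₁ k₂ ω₁' ω₂' (-x + x₀)) := by
  obtain ⟨c, m₁, m₂, h⟩ := h
  obtain ⟨x₀, hx₀⟩ := phases_surjective hk ω₁' ω₂'
    (-ω₁ + 2 * π * ((-m₁ : ℤ) : ℝ), -ω₂ + 2 * π * ((-m₂ : ℤ) : ℝ))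
  refine ⟨x₀, fun x => ?_⟩
  rw [phases_add, hx₀, phases_neg ω₁ ω₂, show -phases k₁ k₂ ω₁ ω₂ x + (ω₁, ω₂) +
      (-ω₁ + 2 * π * ((-m₁ : ℤ) : ℝ), -ω₂ + 2 * π * ((-m₂ : ℤ) : ℝ)) =
      -phases k₁ k₂ ω₁ ω₂ x + (2 * π * ((-m₁ : ℤ) : ℝ), 2 * π * ((-m₂ : ℤ) : ℝ)) by
    ext <;> simp only [Prod.fst_add, Prod.snd_add] <;> ring,
    cosSum_translate _ _ (-c), show ψ' + 2 * π * (((-c : ℤ) : ℝ) + a₁ * ((-m₁ : ℤ) : ℝ) +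
      a₂ * ((-m₂ : ℤ) : ℝ)) = -ψ by push_cast; linear_combination h, cosSum_neg]

end PlaneWaves

theorem stmt9 (r1 r2 r3 : ℝ) (hr1 : 0 < r1) (hr2 : 0 < r2) (hr3 : 0 < r3)
    (k1 k2 : ℝ × ℝ) (hk : LinearIndependent ℝ ![k1, k2])
    (α1 α2 : ℚ) (k3 : ℝ × ℝ) (hk3 : k3 = (α1 : ℝ) • k1 + (α2 : ℝ) • k2)
    (a : ℝ) (ω1 ω2 ω3 ω1' ω2' ω3' : ℝ)
    (V1 V2 : ℝ × ℝ → ℝ)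
    (hV1 : ∀ x, V1 x = a + r1 * cos (2 * π * dot k1 x + ω1)
      + r2 * cos (2 * π * dot k2 x + ω2) + r3 * cos (2 * π * dot k3 x + ω3))
    (hV2 : ∀ x, V2 x = a + r1 * cos (2 * π * dot k1 x + ω1')
      + r2 * cos (2 * π * dot k2 x + ω2') + r3 * cos (2 * π * dot k3 x + ω3'))
    (hsup : (⨆ x : ℝ × ℝ, V1 x) = ⨆ x : ℝ × ℝ, V2 x) :
    ∃ x0 : ℝ × ℝ, (∀ x : ℝ × ℝ, V1 x = V2 (x + x0)) ∨
      (∀ x : ℝ × ℝ, V1 x = V2 (-x + x0)) := by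
  set χ₁ := ω3 - α1 * ω1 - α2 * ω2
  set χ₂ := ω3' - α1 * ω1' - α2 * ω2'
  have hW1 : ∀ x, V1 x = a + cosSum r1 r2 r3 α1 α2 χ₁ (phases k1 k2 ω1 ω2 x) := fun x => by
    rw [hV1, hk3, cosSum_phases]; ring
  have hW2 : ∀ x, V2 x = a + cosSum r1 r2 r3 α1 α2 χ₂ (phases k1 k2 ω1' ω2' x) := fun x => by
    rw [hV2, hk3, cosSum_phases]; ring
  have hS : cosSumSup r1 r2 r3 α1 α2 χ₁ = cosSumSup r1 r2 r3 α1 α2 χ₂ := by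
    rwa [iSup_eq_add_cosSumSup (phases_surjective hk ω1 ω2) hW1,
      iSup_eq_add_cosSumSup (phases_surjective hk ω1' ω2') hW2, add_right_inj] at hsup
  rcases sub_mem_or_add_mem_of_cosSumSup_eq α1 α2 hr1 hr2 hr3 hS with h | h
  · obtain ⟨x0, hx0⟩ := exists_cosSum_phases_eq_add hk ω1 ω2 ω1' ω2' h
    exact ⟨x0, Or.inl fun x => by rw [hW1, hW2, hx0]⟩
  · obtain ⟨x0, hx0⟩ := exists_cosSum_phases_eq_neg_add hk ω1 ω2 ω1' ω2' h
    exact ⟨x0, Or.inr fun x => by rw [hW1, hW2, hx0]⟩
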